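/- arXiv:1112.4005 — 8 statements merged into one kernel-verified Lean document; each statement's English description precedes it below -/
import Mathlib

section
/- Let μ, σ, r, δ > 0 satisfy δ < (μ² + 2rσ²)/(2μ), let β := (1/δ)(r + μ²/(2σ²)), let α > 0, and define V(x) := α·e^{−βx}. Then for every x ∈ ℝ, min_{u ∈ [0,1]} [ (1/2)u²σ²·V''(x) + (uμ − δ)·V'(x) − r·V(x) ] = 0, and the minimum over [0,1] is attained at u* = 2δμ/(2rσ² + μ²), which lies in the open interval (0,1). -/
/-!
Write `E = e^{-βx} > 0`. For `V = α E` the HJB operator at `x` is `α E` times the quadratic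
`½σ²β²u² − μβu + (δβ − r)` in `u`. Completing the square, its minimiser is `μ/(σ²β)` and its
minimum value is `δβ − r − μ²/(2σ²)`; the choice of `β` makes this value `0` and turns the
minimiser into `2δμ/(2rσ² + μ²)`, which lies below `1` exactly in the low-debt regime.
-/

open Real

lemma deriv_const_mul_exp_mul (c a : ℝ) :
    deriv (fun x => c * exp (a * x)) = fun x => c * a * exp (a * x) := by
  funext x
  have h := ((hasDerivAt_id x).const_mul a).exp.const_mul c
  simpa [mul_comm, mul_left_comm, mul_assoc] using h.deriv

lemma hjb_const_mul_exp_eq (σ μ δ r α β E u : ℝ) (hσ : σ ≠ 0) (hβ : β ≠ 0) :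
    1 / 2 * u ^ 2 * σ ^ 2 * (α * -β * -β * E) + (u * μ - δ) * (α * -β * E) - r * (α * E)
      = α * E * (1 / 2 * σ ^ 2 * β ^ 2 * (u - μ / (σ ^ 2 * β)) ^ 2
          + (δ * β - r - μ ^ 2 / (2 * σ ^ 2))) := by
  field_simp
  ring

lemma retention_mem_Ioo {μ σ r δ : ℝ} (hμ : 0 < μ) (hr : 0 < r) (hδ : 0 < δ)
    (hlow : δ < (μ ^ 2 + 2 * r * σ ^ 2) / (2 * μ)) :
    2 * δ * μ / (2 * r * σ ^ 2 + μ ^ 2) ∈ Set.Ioo (0 : ℝ) 1 := by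
  have hden : 0 < 2 * r * σ ^ 2 + μ ^ 2 := by positivity
  refine ⟨by positivity, (div_lt_one hden).mpr ?_⟩
  have := (lt_div_iff₀ (by positivity : (0 : ℝ) < 2 * μ)).mp hlow
  linarith

/-- Low-debt-liability case of proportional reinsurance: the exponential candidate
value function `V x = α * exp (-β x)` with `β = (1/δ)(r + μ²/(2σ²))` solves the HJB
equation, the minimum over `u ∈ [0,1]` of the HJB operator is `0` and is attained at
`u* = 2δμ/(2rσ² + μ²) ∈ (0,1)`. -/
theorem stmt_0 (μ σ r δ α β : ℝ) (hμ : 0 < μ) (hσ : 0 < σ) (hr : 0 < r) (hδ : 0 < δ)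
    (hα : 0 < α)
    (hlow : δ < (μ ^ 2 + 2 * r * σ ^ 2) / (2 * μ))
    (hβ : β = (1 / δ) * (r + μ ^ 2 / (2 * σ ^ 2)))
    (V : ℝ → ℝ) (hV : ∀ x, V x = α * Real.exp (-β * x))
    (ustar : ℝ) (hustar : ustar = 2 * δ * μ / (2 * r * σ ^ 2 + μ ^ 2)) :
    ustar ∈ Set.Ioo (0 : ℝ) 1 ∧
    ∀ x : ℝ,
      IsMinOn
        (fun u : ℝ =>
          (1 / 2) * u ^ 2 * σ ^ 2 * deriv (deriv V) x + (u * μ - δ) * deriv V x - r * V x)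
        (Set.Icc 0 1) ustar ∧
      (1 / 2) * ustar ^ 2 * σ ^ 2 * deriv (deriv V) x + (ustar * μ - δ) * deriv V x
        - r * V x = 0 := by
  have hβpos : 0 < β := by rw [hβ]; positivity
  have hminimiser : ustar = μ / (σ ^ 2 * β) := by
    rw [hustar, hβ]; field_simp
  have hminimum : δ * β - r - μ ^ 2 / (2 * σ ^ 2) = 0 := by
    rw [hβ]; field_simp; ring
  have hsquare : ∀ x u : ℝ,
      (1 / 2) * u ^ 2 * σ ^ 2 * deriv (deriv V) x + (u * μ - δ) * deriv V x - r * V x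
        = α * exp (-β * x) * (1 / 2 * σ ^ 2 * β ^ 2 * (u - ustar) ^ 2) := by
    intro x u
    rw [funext hV, deriv_const_mul_exp_mul, deriv_const_mul_exp_mul,
      hjb_const_mul_exp_eq σ μ δ r α β _ u hσ.ne' hβpos.ne', hminimum, ← hminimiser, add_zero]
  refine ⟨hustar ▸ retention_mem_Ioo hμ hr hδ hlow, fun x => ⟨isMinOn_iff.mpr fun u _ => ?_, ?_⟩⟩
  · rw [hsquare, hsquare, sub_self, zero_pow two_ne_zero, mul_zero, mul_zero]
    positivity
  · rw [hsquare, sub_self]; ring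
end

section
/- Let μ, σ, r > 0 and δ > 0 satisfy δ ≥ (μ² + 2rσ²)/(2μ), let γ := ((μ − δ) + √((μ − δ)² + 2rσ²))/σ² (the unique positive root of (1/2)σ²m² − (μ − δ)m − r = 0), let η > 0, and define V(x) := η·e^{−γx}. Then for every x ∈ ℝ, min_{u ∈ [0,1]} [ (1/2)u²σ²·V''(x) + (uμ − δ)·V'(x) − r·V(x) ] = 0, and the minimum over [0,1] is attained at u = 1. -/
set_option maxHeartbeats 1000000

/-- High-debt-liability case of proportional reinsurance: the exponential candidate
value function `V x = η * exp (-γ x)` solves the HJB equation, the minimum over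
`u ∈ [0,1]` of the HJB operator is `0` and is attained at `u = 1`. -/
theorem stmt_3 (μ σ r δ η γ : ℝ) (hμ : 0 < μ) (hσ : 0 < σ) (hr : 0 < r) (hδ : 0 < δ)
    (hη : 0 < η)
    (hhigh : (μ ^ 2 + 2 * r * σ ^ 2) / (2 * μ) ≤ δ)
    (hγ : γ = ((μ - δ) + Real.sqrt ((μ - δ) ^ 2 + 2 * r * σ ^ 2)) / σ ^ 2)
    (V : ℝ → ℝ) (hV : ∀ x, V x = η * Real.exp (-γ * x)) :
    ∀ x : ℝ,
      IsMinOn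
        (fun u : ℝ =>
          (1 / 2) * u ^ 2 * σ ^ 2 * deriv (deriv V) x + (u * μ - δ) * deriv V x - r * V x)
        (Set.Icc 0 1) 1 ∧
      (1 / 2) * (1 : ℝ) ^ 2 * σ ^ 2 * deriv (deriv V) x + ((1 : ℝ) * μ - δ) * deriv V x
        - r * V x = 0 := by
  have hVfun : V = fun x => η * Real.exp (-γ * x) := funext hV
  subst hVfun
  -- first derivative
  have hd1 : deriv (fun x => η * Real.exp (-γ * x)) = fun x => η * -γ * Real.exp (-γ * x) := by
    funext x
    have h : HasDerivAt (fun x : ℝ => -γ * x) (-γ) x := by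
      simpa using (hasDerivAt_id x).const_mul (-γ)
    have := (h.exp.const_mul η).deriv
    rw [this]; ring
  rw [hd1]
  have hd2 : deriv (fun x => η * -γ * Real.exp (-γ * x))
      = fun x => η * γ ^ 2 * Real.exp (-γ * x) := by
    funext x
    have h : HasDerivAt (fun x : ℝ => -γ * x) (-γ) x := by
      simpa using (hasDerivAt_id x).const_mul (-γ)
    have := (h.exp.const_mul (η * -γ)).deriv
    rw [this]; ring
  rw [hd2]
  -- algebraic facts about γ
  set s : ℝ := Real.sqrt ((μ - δ) ^ 2 + 2 * r * σ ^ 2) with hs_def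
  have hsnn : 0 ≤ s := Real.sqrt_nonneg _
  have hs2 : s ^ 2 = (μ - δ) ^ 2 + 2 * r * σ ^ 2 := by
    rw [hs_def, Real.sq_sqrt]; positivity
  have hσ2 : (0:ℝ) < σ ^ 2 := by positivity
  have hγσ : γ * σ ^ 2 = (μ - δ) + s := by
    rw [hγ]; field_simp
  -- γ > 0
  have hγpos : 0 < γ := by
    have h1 : 0 < (μ - δ) + s := by nlinarith [sq_nonneg (s + (μ - δ))]
    nlinarith
  -- root equation
  have hroot : (1/2) * σ ^ 2 * γ ^ 2 - (μ - δ) * γ - r = 0 := by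
    have h : ((1/2) * σ ^ 2 * γ ^ 2 - (μ - δ) * γ - r) * (2 * σ ^ 2)
        = (γ * σ ^ 2) ^ 2 - 2 * (μ - δ) * (γ * σ ^ 2) - 2 * r * σ ^ 2 := by ring
    have h2 : (γ * σ ^ 2) ^ 2 - 2 * (μ - δ) * (γ * σ ^ 2) - 2 * r * σ ^ 2 = 0 := by
      rw [hγσ]; nlinarith
    have := h.trans h2
    have hne : (2 * σ ^ 2 : ℝ) ≠ 0 := by positivity
    exact (mul_eq_zero.mp this).resolve_right hne
  -- s ≤ δ, hence σ² γ ≤ μ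
  have hsδ : s ≤ δ := by
    have h1 : s ^ 2 ≤ δ ^ 2 := by
      rw [hs2]
      have h2 : μ ^ 2 + 2 * r * σ ^ 2 ≤ 2 * μ * δ := by
        have := (div_le_iff₀ (by positivity : (0:ℝ) < 2 * μ)).mp hhigh
        linarith
      nlinarith
    nlinarith
  have hγμ : γ * σ ^ 2 ≤ μ := by rw [hγσ]; linarith
  intro x
  set E : ℝ := Real.exp (-γ * x) with hE_def
  have hEpos : 0 < E := Real.exp_pos _
  have hval : (1 / 2) * (1 : ℝ) ^ 2 * σ ^ 2 * (η * γ ^ 2 * E) + ((1 : ℝ) * μ - δ) * (η * -γ * E)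
      - r * (η * E) = 0 := by
    have : (1 / 2) * (1 : ℝ) ^ 2 * σ ^ 2 * (η * γ ^ 2 * E) + ((1 : ℝ) * μ - δ) * (η * -γ * E)
        - r * (η * E) = η * E * ((1/2) * σ ^ 2 * γ ^ 2 - (μ - δ) * γ - r) := by ring
    rw [this, hroot, mul_zero]
  refine ⟨?_, hval⟩
  rw [isMinOn_iff]
  intro u hu
  obtain ⟨hu0, hu1⟩ := hu
  simp only
  have hdiff : (1 / 2) * u ^ 2 * σ ^ 2 * (η * γ ^ 2 * E) + (u * μ - δ) * (η * -γ * E)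
      - r * (η * E)
      - ((1 / 2) * (1:ℝ) ^ 2 * σ ^ 2 * (η * γ ^ 2 * E) + ((1:ℝ) * μ - δ) * (η * -γ * E)
      - r * (η * E))
      = η * E * γ * (u - 1) * ((1/2) * σ ^ 2 * γ * (u + 1) - μ) := by ring
  have hfac : 0 ≤ η * E * γ * (u - 1) * ((1/2) * σ ^ 2 * γ * (u + 1) - μ) := by
    have h1 : u - 1 ≤ 0 := by linarith
    have h2 : (1/2) * σ ^ 2 * γ * (u + 1) - μ ≤ 0 := by nlinarith
    have h3 : 0 ≤ η * E * γ := by positivity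
    have h4 : 0 ≤ (u - 1) * ((1/2) * σ ^ 2 * γ * (u + 1) - μ) := by
      calc (0:ℝ) ≤ -(u - 1) * -((1/2) * σ ^ 2 * γ * (u + 1) - μ) :=
            mul_nonneg (neg_nonneg.mpr h1) (neg_nonneg.mpr h2)
        _ = (u - 1) * ((1/2) * σ ^ 2 * γ * (u + 1) - μ) := by ring
    calc (0:ℝ) ≤ η * E * γ * ((u - 1) * ((1/2) * σ ^ 2 * γ * (u + 1) - μ)) :=
          mul_nonneg h3 h4
      _ = η * E * γ * (u - 1) * ((1/2) * σ ^ 2 * γ * (u + 1) - μ) := by ring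
  linarith [hdiff, hfac]
end

section
/- Let β > 0 and K > 0. Let 1 ≤ c₁ < c₂, and for i = 1, 2 let αᵢ ∈ (cᵢ/β, ∞) satisfy K + (cᵢ/β)·ln(αᵢβ/cᵢ) + cᵢ/β − αᵢ = 0. Then α₁/c₁ > α₂/c₂, and consequently (1/β)·ln(α₁β/c₁) > (1/β)·ln(α₂β/c₂). -/
/-!
Writing `θ = αβ/c`, the defining equation becomes `θ - 1 - log θ = Kβ/c`. The left side is
strictly increasing for `θ ≥ 1` and the right side strictly decreases in `c`, so a larger `c`
forces a smaller `θ`; the ratio `α/c = θ/β` and the injection size `(log θ)/β` follow `θ`.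
-/

open Real

lemma sub_one_sub_log_strictMonoOn :
    StrictMonoOn (fun θ : ℝ => θ - 1 - log θ) (Set.Ici 1) := by
  intro a (ha : 1 ≤ a) b _ hab
  have ha0 : 0 < a := one_pos.trans_le ha
  have hb0 : 0 < b := ha0.trans hab
  have hlog : log (b / a) < b / a - 1 :=
    log_lt_sub_one_of_pos (div_pos hb0 ha0) (ne_of_gt ((one_lt_div ha0).mpr hab))
  have hdiv : b / a - 1 ≤ b - a := by
    rw [div_sub_one ha0.ne', div_le_iff₀ ha0]
    nlinarith
  rw [log_div hb0.ne' ha0.ne'] at hlog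
  show a - 1 - log a < b - 1 - log b
  linarith

lemma sub_one_sub_log_mul_div_eq {β K c α : ℝ} (hβ : 0 < β) (hc : 0 < c)
    (h : K + (c / β) * log (α * β / c) + c / β - α = 0) :
    α * β / c - 1 - log (α * β / c) = K * β / c := by
  field_simp at h ⊢
  linarith

lemma one_lt_mul_div_of_div_lt {β c α : ℝ} (hβ : 0 < β) (hc : 0 < c) (hα : c / β < α) :
    1 < α * β / c := by
  rwa [one_lt_div hc, ← div_lt_iff₀ hβ]

/-- A larger proportional cost rate `c` yields a smaller ratio `θ = α/c` and a smaller
optimal injection size `ξ* = (1/β) ln(αβ/c)`. -/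
theorem stmt_8 (β K : ℝ) (hβ : 0 < β) (hK : 0 < K)
    (c₁ c₂ α₁ α₂ : ℝ) (hc₁ : 1 ≤ c₁) (hc₁₂ : c₁ < c₂)
    (hα₁ : α₁ ∈ Set.Ioi (c₁ / β)) (hα₂ : α₂ ∈ Set.Ioi (c₂ / β))
    (h₁ : K + (c₁ / β) * Real.log (α₁ * β / c₁) + c₁ / β - α₁ = 0)
    (h₂ : K + (c₂ / β) * Real.log (α₂ * β / c₂) + c₂ / β - α₂ = 0) :
    α₂ / c₂ < α₁ / c₁ ∧
    (1 / β) * Real.log (α₂ * β / c₂) < (1 / β) * Real.log (α₁ * β / c₁) := by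
  have hc₁0 : 0 < c₁ := one_pos.trans_le hc₁
  have hc₂0 : 0 < c₂ := hc₁0.trans hc₁₂
  have hθ₁ := one_lt_mul_div_of_div_lt hβ hc₁0 hα₁
  have hθ₂ := one_lt_mul_div_of_div_lt hβ hc₂0 hα₂
  have hθ : α₂ * β / c₂ < α₁ * β / c₁ := by
    refine (sub_one_sub_log_strictMonoOn.lt_iff_lt hθ₂.le hθ₁.le).mp ?_
    simp only [sub_one_sub_log_mul_div_eq hβ hc₁0 h₁, sub_one_sub_log_mul_div_eq hβ hc₂0 h₂]
    exact div_lt_div_of_pos_left (by positivity) hc₁0 hc₁₂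
  constructor
  · rw [mul_div_right_comm, mul_div_right_comm α₁] at hθ
    exact lt_of_mul_lt_mul_right hθ hβ.le
  · exact mul_lt_mul_of_pos_left (log_lt_log (one_pos.trans hθ₂) hθ) (one_div_pos.mpr hβ)
end

section
/- Let β > 0, c > 0, K > 0, let α ∈ (c/β, ∞) satisfy K + (c/β)·ln(αβ/c) + c/β − α = 0, and set ξ* := (1/β)·ln(αβ/c). Then for every x < 0, inf { K + cξ + α·e^{−β(x+ξ)} : ξ > 0 and x + ξ ≥ 0 } = α − c·x, and the infimum is attained at ξ = ξ* − x. -/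
/-!
Writing `t = x + ξ ≥ 0` for the post-injection surplus, the cost is `K - c x + (c t + α e^{-β t})`.
The bracket is convex in `t` with critical point `ξ*`, where `α e^{-β ξ*} = c / β`; by the tangent
line inequality for `exp` it is at least its value at `ξ*`, and the defining equation of `α`
says exactly that `K + c ξ* + c / β = α`. Since `ξ* > 0` and `x < 0`, `ξ = ξ* - x` is admissible.
-/

open Real

lemma exp_neg_mul_tangent_le (β s t : ℝ) :
    exp (-β * s) * (1 - β * (t - s)) ≤ exp (-β * t) := by
  have hsplit : exp (-β * t) = exp (-β * s) * exp (-β * (t - s)) := by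
    rw [← exp_add]; ring_nf
  rw [hsplit]
  gcongr
  linarith [add_one_le_exp (-β * (t - s))]

lemma linear_add_exp_le_of_critical {α β c s : ℝ} (hα : 0 ≤ α)
    (hcrit : α * β * exp (-β * s) = c) (t : ℝ) :
    c * s + α * exp (-β * s) ≤ c * t + α * exp (-β * t) := by
  have htan := mul_le_mul_of_nonneg_left (exp_neg_mul_tangent_le β s t) hα
  have htan_eq : α * (exp (-β * s) * (1 - β * (t - s))) = α * exp (-β * s) - c * (t - s) := by
    rw [← hcrit]; ring
  linarith

lemma mul_mul_exp_neg_mul_log_eq {α β c : ℝ} (hpos : 0 < α * β / c) :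
    α * β * exp (-β * ((1 / β) * log (α * β / c))) = c := by
  have hc : c ≠ 0 := by rintro rfl; simp at hpos
  have hα : α ≠ 0 := by rintro rfl; simp at hpos
  have hβ : β ≠ 0 := by rintro rfl; simp at hpos
  have hexp : -β * ((1 / β) * log (α * β / c)) = -log (α * β / c) := by
    field_simp
  rw [hexp, exp_neg, exp_log hpos]
  field_simp

theorem stmt_10_general (β c K α : ℝ) (hβ : 0 < β) (hc : 0 < c)
    (hα : α ∈ Set.Ioi (c / β))
    (heq : K + (c / β) * Real.log (α * β / c) + c / β - α = 0)
    (ξstar : ℝ) (hξ : ξstar = (1 / β) * Real.log (α * β / c)) :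
    ∀ x < (0 : ℝ),
      IsLeast {y | ∃ ξ, 0 < ξ ∧ 0 ≤ x + ξ ∧ y = K + c * ξ + α * Real.exp (-β * (x + ξ))}
        (α - c * x) ∧
      K + c * (ξstar - x) + α * Real.exp (-β * (x + (ξstar - x))) = α - c * x := by
  intro x hx
  have hcαβ : c < α * β := (div_lt_iff₀ hβ).mp hα
  have hα0 : 0 < α := lt_trans (div_pos hc hβ) hα
  have hratio : 1 < α * β / c := (one_lt_div hc).mpr hcαβ
  have hcrit : α * β * exp (-β * ξstar) = c := by
    rw [hξ]; exact mul_mul_exp_neg_mul_log_eq (by linarith)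
  have hξpos : 0 < ξstar := by rw [hξ]; exact mul_pos (by positivity) (log_pos hratio)
  have hmin : K + c * ξstar + α * exp (-β * ξstar) = α := by
    have hαexp : α * exp (-β * ξstar) = c / β := by
      rw [eq_div_iff hβ.ne', ← hcrit]; ring
    have hcξ : c * ξstar = c / β * log (α * β / c) := by rw [hξ]; ring
    linarith
  have hval : K + c * (ξstar - x) + α * exp (-β * (x + (ξstar - x))) = α - c * x := by
    rw [add_sub_cancel]; linarith
  refine ⟨⟨⟨ξstar - x, by linarith, by linarith, hval.symm⟩, ?_⟩, hval⟩
  rintro y ⟨ξ, -, -, rfl⟩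
  linarith [linear_add_exp_le_of_critical hα0.le hcrit (x + ξ)]

/-- Extension of the minimal cost function to a negative initial surplus `x < 0`:
the infimum of `K + cξ + α exp(−β(x+ξ))` over injections `ξ > 0` restoring a
non-negative surplus equals `α − cx` and is attained at `ξ = ξ* − x`. -/
theorem stmt_10 (β c K α : ℝ) (hβ : 0 < β) (hc : 0 < c) (hK : 0 < K)
    (hα : α ∈ Set.Ioi (c / β))
    (heq : K + (c / β) * Real.log (α * β / c) + c / β - α = 0)
    (ξstar : ℝ) (hξ : ξstar = (1 / β) * Real.log (α * β / c)) :
    ∀ x < (0 : ℝ),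
      IsLeast {y | ∃ ξ, 0 < ξ ∧ 0 ≤ x + ξ ∧ y = K + c * ξ + α * Real.exp (-β * (x + ξ))}
        (α - c * x) ∧
      K + c * (ξstar - x) + α * Real.exp (-β * (x + (ξstar - x))) = α - c * x :=
  stmt_10_general β c K α hβ hc hα heq ξstar hξ
end

section
/- Let F: ℝ → ℝ be measurable and nondecreasing with F(x) = 0 for x ≤ 0 and 0 ≤ F(x) ≤ 1 for all x, let r > 0 and δ > 0, and define for u > 0: μ(u) := ∫₀^u (1 − F(x)) dx, σ²(u) := ∫₀^u 2x(1 − F(x)) dx, and J(u) := σ²(u)/(2u) − μ(u) − ru + δ. Then J is strictly decreasing on (0, ∞), J(u) → δ as u → 0⁺, and if N > 0 satisfies J(N) < 0 (equivalently δ < μ(N) + rN − σ²(N)/(2N)), then there exists a unique u* ∈ (0, N) with J(u*) = 0. -/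
open MeasureTheory intervalIntegral Set Filter

/-- For the excess-of-loss reinsurance model with claim-size distribution `F`, the
function `J(u) = σ²(u)/(2u) − μ(u) − ru + δ` is strictly decreasing on `(0, ∞)`, tends
to `δ` as `u → 0⁺`, and if `J(N) < 0` then `J` has a unique zero in `(0, N)`. -/
theorem stmt_11 (F : ℝ → ℝ) (hmeas : Measurable F) (hmono : Monotone F)
    (hF0 : ∀ x ≤ (0 : ℝ), F x = 0) (hF1 : ∀ x, 0 ≤ F x ∧ F x ≤ 1)
    (r δ : ℝ) (hr : 0 < r) (hδ : 0 < δ)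
    (μ σ2 J : ℝ → ℝ)
    (hμ : ∀ u, μ u = ∫ x in (0 : ℝ)..u, (1 - F x))
    (hσ2 : ∀ u, σ2 u = ∫ x in (0 : ℝ)..u, 2 * x * (1 - F x))
    (hJ : ∀ u, J u = σ2 u / (2 * u) - μ u - r * u + δ) :
    StrictAntiOn J (Set.Ioi 0) ∧
    Filter.Tendsto J (nhdsWithin 0 (Set.Ioi 0)) (nhds δ) ∧
    ∀ N : ℝ, 0 < N → J N < 0 → ∃! u, u ∈ Set.Ioo 0 N ∧ J u = 0 := by
  have hG0 : ∀ x, 0 ≤ 1 - F x := fun x => by linarith [(hF1 x).2]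
  have hG1 : ∀ x, (1 : ℝ) - F x ≤ 1 := fun x => by linarith [(hF1 x).1]
  have hGm : Measurable fun x : ℝ => 1 - F x := measurable_const.sub hmeas
  have hGint : ∀ a b : ℝ, IntervalIntegrable (fun x => 1 - F x) volume a b := by
    intro a b
    refine IntervalIntegrable.mono_fun' (g := fun _ => (1 : ℝ))
      intervalIntegrable_const hGm.aestronglyMeasurable.restrict ?_
    filter_upwards with x
    rw [Real.norm_eq_abs, abs_of_nonneg (hG0 x)]
    exact hG1 x
  have hPint : ∀ a b : ℝ, IntervalIntegrable (fun x => x * (1 - F x)) volume a b := by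
    intro a b
    refine IntervalIntegrable.mono_fun' (g := fun _ => max |a| |b|)
      intervalIntegrable_const (measurable_id.mul hGm).aestronglyMeasurable.restrict ?_
    rw [Filter.EventuallyLE, ae_restrict_iff' measurableSet_uIoc]
    filter_upwards with x hx
    obtain ⟨h1, h2⟩ := hx
    have hxb : |x| ≤ max |a| |b| := by
      rw [abs_le]
      rcases le_total a b with h | h
      · rw [min_eq_left h] at h1; rw [max_eq_right h] at h2
        constructor
        · linarith [neg_abs_le a, le_max_left |a| |b|]
        · linarith [le_abs_self b, le_max_right |a| |b|]
      · rw [min_eq_right h] at h1; rw [max_eq_left h] at h2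
        constructor
        · linarith [neg_abs_le b, le_max_right |a| |b|]
        · linarith [le_abs_self a, le_max_left |a| |b|]
    calc ‖x * (1 - F x)‖ = |x| * |1 - F x| := abs_mul _ _
      _ ≤ |x| * 1 :=
          mul_le_mul_of_nonneg_left (by rw [abs_of_nonneg (hG0 x)]; exact hG1 x) (abs_nonneg x)
      _ ≤ max |a| |b| := by rw [mul_one]; exact hxb
  set Q : ℝ → ℝ := fun u => ∫ x in (0 : ℝ)..u, (1 - F x) with hQdef
  set P : ℝ → ℝ := fun u => ∫ x in (0 : ℝ)..u, x * (1 - F x) with hPdef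
  have hJ' : ∀ u, J u = P u / u - Q u - r * u + δ := by
    intro u
    rw [hJ, hμ, hσ2]
    have h2P : (∫ x in (0 : ℝ)..u, 2 * x * (1 - F x)) = 2 * P u := by
      rw [hPdef, ← intervalIntegral.integral_const_mul]
      congr 1; funext x; ring
    rw [h2P, mul_div_mul_left _ _ (two_ne_zero), hQdef]
  have hPnonneg : ∀ u : ℝ, 0 ≤ u → 0 ≤ P u := by
    intro u hu
    exact intervalIntegral.integral_nonneg hu fun x hx => mul_nonneg hx.1 (hG0 x)
  have hQnonneg : ∀ u : ℝ, 0 ≤ u → 0 ≤ Q u := by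
    intro u hu
    exact intervalIntegral.integral_nonneg hu fun x _ => hG0 x
  have hQle : ∀ u : ℝ, 0 ≤ u → Q u ≤ u := by
    intro u hu
    calc Q u ≤ ∫ _ in (0 : ℝ)..u, (1 : ℝ) :=
          intervalIntegral.integral_mono_on hu (hGint 0 u) intervalIntegrable_const
            fun x _ => hG1 x
      _ = u := by simp
  have hPQ : ∀ a b : ℝ, 0 ≤ a → a ≤ b →
      (∫ x in a..b, x * (1 - F x)) ≤ b * ∫ x in a..b, (1 - F x) := by
    intro a b ha hab
    rw [← intervalIntegral.integral_const_mul]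
    refine intervalIntegral.integral_mono_on hab (hPint a b) ((hGint a b).const_mul b) ?_
    intro x hx
    exact mul_le_mul_of_nonneg_right hx.2 (hG0 x)
  have hanti : StrictAntiOn J (Set.Ioi 0) := by
    intro a ha b hb hab
    rw [Set.mem_Ioi] at ha hb
    rw [hJ' a, hJ' b]
    have h1 : P a + (∫ x in a..b, x * (1 - F x)) = P b :=
      intervalIntegral.integral_add_adjacent_intervals (hPint 0 a) (hPint a b)
    have h2 : Q a + (∫ x in a..b, (1 - F x)) = Q b :=
      intervalIntegral.integral_add_adjacent_intervals (hGint 0 a) (hGint a b)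
    have h3 := hPQ a b ha.le hab.le
    have h4 := hPnonneg a ha.le
    have h5 : P a / b ≤ P a / a := div_le_div_of_nonneg_left h4 ha hab.le
    have h6 : P b / b ≤ P a / b + (∫ x in a..b, (1 - F x)) := by
      rw [← h1, add_div]
      have hb' : (∫ x in a..b, x * (1 - F x)) / b ≤ (b * ∫ x in a..b, (1 - F x)) / b :=
        div_le_div_of_nonneg_right h3 hb.le
      rw [mul_div_cancel_left₀ _ (ne_of_gt hb)] at hb'
      linarith
    have h7 : r * a < r * b := mul_lt_mul_of_pos_left hab hr
    linarith [h2, h5, h6]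
  have hlim : Filter.Tendsto J (nhdsWithin 0 (Set.Ioi 0)) (nhds δ) := by
    have hsq : ∀ u ∈ Set.Ioi (0 : ℝ), δ - (1 + r) * u ≤ J u ∧ J u ≤ δ + (1 + r) * u := by
      intro u hu
      rw [Set.mem_Ioi] at hu
      rw [hJ' u]
      have h4 := hPnonneg u hu.le
      have hQu := hQle u hu.le
      have hQ0 := hQnonneg u hu.le
      have hPu : P u ≤ u * Q u := by simpa using hPQ 0 u le_rfl hu.le
      have h5 : P u / u ≤ Q u := (div_le_iff₀ hu).mpr (by nlinarith)
      have h6 : 0 ≤ P u / u := div_nonneg h4 hu.le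
      constructor <;> nlinarith
    have hlow : Tendsto (fun u : ℝ => δ - (1 + r) * u) (nhdsWithin 0 (Set.Ioi 0)) (nhds δ) := by
      have h : Tendsto (fun u : ℝ => δ - (1 + r) * u) (nhds 0) (nhds (δ - (1 + r) * 0)) :=
        tendsto_const_nhds.sub (tendsto_const_nhds.mul tendsto_id)
      simpa using h.mono_left nhdsWithin_le_nhds
    have hhigh : Tendsto (fun u : ℝ => δ + (1 + r) * u) (nhdsWithin 0 (Set.Ioi 0)) (nhds δ) := by
      have h : Tendsto (fun u : ℝ => δ + (1 + r) * u) (nhds 0) (nhds (δ + (1 + r) * 0)) :=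
        tendsto_const_nhds.add (tendsto_const_nhds.mul tendsto_id)
      simpa using h.mono_left nhdsWithin_le_nhds
    refine tendsto_of_tendsto_of_tendsto_of_le_of_le' hlow hhigh ?_ ?_
    · exact eventually_nhdsWithin_of_forall fun u hu => (hsq u hu).1
    · exact eventually_nhdsWithin_of_forall fun u hu => (hsq u hu).2
  refine ⟨hanti, hlim, ?_⟩
  intro N hN hJN
  have hQcont : Continuous Q := intervalIntegral.continuous_primitive hGint 0
  have hPcont : Continuous P := intervalIntegral.continuous_primitive hPint 0
  have hJcont : ContinuousOn J (Set.Ioi 0) := by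
    have h : ContinuousOn (fun u => P u / u - Q u - r * u + δ) (Set.Ioi 0) := by
      refine ContinuousOn.add (ContinuousOn.sub (ContinuousOn.sub ?_ hQcont.continuousOn)
        (continuous_const.mul continuous_id).continuousOn) continuousOn_const
      exact ContinuousOn.div hPcont.continuousOn continuousOn_id
        fun x hx => ne_of_gt (Set.mem_Ioi.mp hx)
    exact h.congr fun u _ => hJ' u
  have hev : ∀ᶠ u in nhdsWithin 0 (Set.Ioi 0), 0 < J u :=
    hlim.eventually (eventually_gt_nhds hδ)
  have hmem : ∀ᶠ u in nhdsWithin 0 (Set.Ioi 0), u ∈ Set.Ioo 0 N :=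
    eventually_of_mem (Ioo_mem_nhdsGT_of_mem ⟨le_rfl, hN⟩) fun x hx => hx
  obtain ⟨a, haJ, ha⟩ := (hev.and hmem).exists
  have ha0 : 0 < a := ha.1
  have haN : a < N := ha.2
  have hsub : Set.Icc a N ⊆ Set.Ioi 0 := fun x hx => lt_of_lt_of_le ha0 hx.1
  have hivt : (0 : ℝ) ∈ J '' Set.Ioo a N :=
    intermediate_value_Ioo' haN.le (hJcont.mono hsub) ⟨hJN, haJ⟩
  obtain ⟨u, hu, hJu⟩ := hivt
  have hu0 : 0 < u := lt_trans ha0 hu.1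
  refine ⟨u, ⟨⟨hu0, hu.2⟩, hJu⟩, ?_⟩
  rintro v ⟨hv, hJv⟩
  exact hanti.injOn (Set.mem_Ioi.mpr hv.1) (Set.mem_Ioi.mpr hu0) (hJv.trans hJu.symm)
end

section
/- Let F: ℝ → ℝ be measurable and nondecreasing with F(x) = 0 for x ≤ 0 and 0 ≤ F(x) ≤ 1 for all x, let r > 0, δ > 0, N > 0, and define μ(u) := ∫₀^u (1 − F(x)) dx and σ²(u) := ∫₀^u 2x(1 − F(x)) dx. Suppose κ > 0 satisfies 0 < 1/κ < N and (1/2)σ²(1/κ)·κ² − (μ(1/κ) − δ)·κ − r = 0. Let ς > 0 and V(x) := ς·e^{−κx}. Then for every x ∈ ℝ, min_{u ∈ [0,N]} [ (1/2)σ²(u)·V''(x) + (μ(u) − δ)·V'(x) − r·V(x) ] = 0, and the minimum over [0,N] is attained at u = 1/κ. -/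
/-- Low-debt-liability case of excess-of-loss reinsurance: if `κ > 0` satisfies
`0 < 1/κ < N` and the characteristic equation, then `V x = ς exp(−κx)` solves the HJB
equation; the minimum over `u ∈ [0, N]` of the HJB operator is `0`, attained at
`u = 1/κ`. -/
theorem stmt_12 (F : ℝ → ℝ) (hmeas : Measurable F) (hmono : Monotone F)
    (hF0 : ∀ x ≤ (0 : ℝ), F x = 0) (hF1 : ∀ x, 0 ≤ F x ∧ F x ≤ 1)
    (r δ N : ℝ) (hr : 0 < r) (hδ : 0 < δ) (hN : 0 < N)
    (μ σ2 : ℝ → ℝ)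
    (hμ : ∀ u, μ u = ∫ x in (0 : ℝ)..u, (1 - F x))
    (hσ2 : ∀ u, σ2 u = ∫ x in (0 : ℝ)..u, 2 * x * (1 - F x))
    (κ : ℝ) (hκ0 : 0 < 1 / κ) (hκN : 1 / κ < N)
    (hroot : (1 / 2) * σ2 (1 / κ) * κ ^ 2 - (μ (1 / κ) - δ) * κ - r = 0)
    (ς : ℝ) (hς : 0 < ς)
    (V : ℝ → ℝ) (hV : ∀ x, V x = ς * Real.exp (-κ * x)) :
    ∀ x : ℝ,
      IsMinOn
        (fun u : ℝ => (1 / 2) * σ2 u * deriv (deriv V) x + (μ u - δ) * deriv V x - r * V x)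
        (Set.Icc 0 N) (1 / κ) ∧
      (1 / 2) * σ2 (1 / κ) * deriv (deriv V) x + (μ (1 / κ) - δ) * deriv V x - r * V x = 0 := by
  have hκpos : 0 < κ := one_div_pos.mp hκ0
  set c : ℝ := 1 / κ with hc
  -- integrability
  have hanti : Antitone (fun x : ℝ => 1 - F x) := fun a b hab => by
    simp only [sub_le_sub_iff_left]
    exact hmono hab
  have hInt1 : ∀ a b : ℝ, IntervalIntegrable (fun x => 1 - F x) MeasureTheory.volume a b :=
    fun a b => hanti.intervalIntegrable
  have hInt2 : ∀ a b : ℝ, IntervalIntegrable (fun x => 2 * x * (1 - F x))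
      MeasureTheory.volume a b := fun a b =>
    (hInt1 a b).continuousOn_mul (by fun_prop)
  have hInt3 : ∀ a b : ℝ, IntervalIntegrable (fun x => (κ * x - 1) * (1 - F x))
      MeasureTheory.volume a b := fun a b =>
    (hInt1 a b).continuousOn_mul (by fun_prop)
  -- splitting integrals
  have hsplitσ : ∀ u : ℝ, σ2 u - σ2 c = ∫ x in c..u, 2 * x * (1 - F x) := by
    intro u
    rw [hσ2 u, hσ2 c, ← intervalIntegral.integral_add_adjacent_intervals (hInt2 0 c) (hInt2 c u)]
    ring
  have hsplitμ : ∀ u : ℝ, μ u - μ c = ∫ x in c..u, (1 - F x) := by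
    intro u
    rw [hμ u, hμ c, ← intervalIntegral.integral_add_adjacent_intervals (hInt1 0 c) (hInt1 c u)]
    ring
  -- key identity
  have hkey : ∀ u : ℝ, (1 / 2) * σ2 u * κ ^ 2 - (μ u - δ) * κ - r
      = κ * ∫ x in c..u, (κ * x - 1) * (1 - F x) := by
    intro u
    have e : (∫ x in c..u, (κ * x - 1) * (1 - F x))
        = (κ / 2) * (∫ x in c..u, 2 * x * (1 - F x)) - ∫ x in c..u, (1 - F x) := by
      rw [← intervalIntegral.integral_const_mul,
        ← intervalIntegral.integral_sub ((hInt2 c u).const_mul _) (hInt1 c u)]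
      congr 1
      funext x
      ring
    rw [e, ← hsplitσ u, ← hsplitμ u]
    linear_combination hroot
  -- nonnegativity of the integral on [0, N]
  have hnn : ∀ u ∈ Set.Icc (0 : ℝ) N, 0 ≤ ∫ x in c..u, (κ * x - 1) * (1 - F x) := by
    intro u _
    rcases le_total c u with h | h
    · apply intervalIntegral.integral_nonneg h
      intro x hx
      have h1 : 0 ≤ κ * x - 1 := by
        have hcx : c ≤ x := hx.1
        rw [hc] at hcx
        nlinarith [(div_le_iff₀ hκpos).mp hcx]
      exact mul_nonneg h1 (by linarith [(hF1 x).2])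
    · rw [intervalIntegral.integral_symm u c, ← intervalIntegral.integral_neg]
      apply intervalIntegral.integral_nonneg h
      intro x hx
      rw [neg_nonneg]
      have h1 : κ * x - 1 ≤ 0 := by
        have hcx : x ≤ c := hx.2
        rw [hc] at hcx
        nlinarith [(le_div_iff₀ hκpos).mp hcx]
      exact mul_nonpos_of_nonpos_of_nonneg h1 (by linarith [(hF1 x).2])
  -- derivatives of V
  have hVeq : V = fun x => ς * Real.exp (-κ * x) := funext hV
  have hD1 : deriv V = fun x => -κ * (ς * Real.exp (-κ * x)) := by
    funext x
    rw [hVeq]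
    have h1 : HasDerivAt (fun y : ℝ => -κ * y) (-κ) x := by
      simpa using (hasDerivAt_id x).const_mul (-κ)
    have h3 := h1.exp.const_mul ς
    rw [h3.deriv]
    ring
  have hD2 : ∀ x : ℝ, deriv (deriv V) x = κ ^ 2 * V x := by
    intro x
    rw [hD1, hVeq]
    have h1 : HasDerivAt (fun y : ℝ => -κ * y) (-κ) x := by
      simpa using (hasDerivAt_id x).const_mul (-κ)
    have h3 := (h1.exp.const_mul ς).const_mul (-κ)
    rw [h3.deriv]
    ring
  have hd1 : ∀ x : ℝ, deriv V x = -κ * V x := by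
    intro x
    rw [hD1, hV x]
  intro x
  have hVx : 0 < V x := by rw [hV x]; positivity
  have hHJB : ∀ u : ℝ, (1 / 2) * σ2 u * deriv (deriv V) x + (μ u - δ) * deriv V x - r * V x
      = V x * ((1 / 2) * σ2 u * κ ^ 2 - (μ u - δ) * κ - r) := by
    intro u
    rw [hD2 x, hd1 x]
    ring
  have hgc : (1 / 2) * σ2 c * κ ^ 2 - (μ c - δ) * κ - r = 0 := hroot
  constructor
  · intro u hu
    simp only [Set.mem_setOf_eq]
    rw [hHJB u, hHJB c, hgc, mul_zero, hkey u]
    have := hnn u hu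
    positivity
  · rw [hHJB c, hgc, mul_zero]
end

section
/- Let σ² > 0, r > 0, and μ, δ, N ∈ ℝ with N > 0, and let γ be the unique positive root of (1/2)σ²·m² − (μ − δ)·m − r = 0, i.e. γ = ((μ − δ) + √((μ − δ)² + 2rσ²))/σ². Then γ ≤ 1/N if and only if δ ≥ μ + rN − σ²/(2N). -/
/-- With `γ = ((μ−δ) + √((μ−δ)² + 2rσ²))/σ²` the unique positive root of
`(1/2)σ²m² − (μ−δ)m − r = 0`, one has `γ ≤ 1/N` if and only if
`δ ≥ μ + rN − σ²/(2N)` (the high-debt-liability regime). -/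
theorem stmt_14 (σ2 r μ δ N : ℝ) (hσ2 : 0 < σ2) (hr : 0 < r) (hN : 0 < N)
    (γ : ℝ) (hγ : γ = ((μ - δ) + Real.sqrt ((μ - δ) ^ 2 + 2 * r * σ2)) / σ2) :
    γ ≤ 1 / N ↔ μ + r * N - σ2 / (2 * N) ≤ δ := by
  subst hγ
  set a := μ - δ with ha
  have hs0 : 0 ≤ a ^ 2 + 2 * r * σ2 := by positivity
  set s := Real.sqrt (a ^ 2 + 2 * r * σ2) with hsdef
  have hsq : s ^ 2 = a ^ 2 + 2 * r * σ2 := Real.sq_sqrt hs0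
  have hsnn : 0 ≤ s := Real.sqrt_nonneg _
  have hN2 : (0 : ℝ) < 2 * N := by linarith
  have key : σ2 / (2 * N) * (2 * N) = σ2 := div_mul_cancel₀ _ (ne_of_gt hN2)
  rw [div_le_div_iff₀ hσ2 hN]
  constructor
  · intro h
    -- from (a + s) * N ≤ σ2 derive 2*a*N + 2*r*N^2 ≤ σ2
    have h2 : 2 * a * N + 2 * r * N ^ 2 ≤ σ2 := by
      nlinarith [hsq, hsnn, h, hσ2, hN, sq_nonneg (s * N - (σ2 - a * N)),
        mul_pos hσ2 hN, mul_nonneg hsnn hN.le]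
    nlinarith [h2, key, hN2]
  · intro h
    have h2 : 2 * a * N + 2 * r * N ^ 2 ≤ σ2 := by
      nlinarith [h, key, hN2]
    have ht2 : 2 * a + 2 * r * N ≤ σ2 / N := by
      rw [le_div_iff₀ hN]; nlinarith [h2]
    have hb : 0 ≤ σ2 / N - a := by
      rcases le_or_gt a 0 with h' | h'
      · have := div_pos hσ2 hN; linarith
      · linarith [ht2, mul_pos hr hN]
    have hsle : s ≤ σ2 / N - a := by
      have hsq2 : a ^ 2 + 2 * r * σ2 ≤ (σ2 / N - a) ^ 2 := by
        have hNN : σ2 / N * N = σ2 := div_mul_cancel₀ _ (ne_of_gt hN)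
        have ht : 0 < σ2 / N := div_pos hσ2 hN
        nlinarith [mul_le_mul_of_nonneg_left ht2 ht.le, hNN]
      calc s ≤ Real.sqrt ((σ2 / N - a) ^ 2) := Real.sqrt_le_sqrt hsq2
        _ = σ2 / N - a := Real.sqrt_sq hb
    have hNN : σ2 / N * N = σ2 := div_mul_cancel₀ _ (ne_of_gt hN)
    nlinarith [hsle, hNN, hN]
end

section
/- Let μ, σ, r, δ > 0, let α > 0 and β > 0, and define V(x) := α·e^{−βx}. Then V satisfies the nonlinear equation (1/2)(μ²/σ²)·(V'(x))²/V''(x) + δ·V'(x) + r·V(x) = 0 for all x ∈ ℝ if and only if β = (1/δ)(r + μ²/(2σ²)). -/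
lemma deriv_exp_aux (α β : ℝ) :
    deriv (fun x : ℝ => α * Real.exp (-β * x)) = fun x => α * (-β) * Real.exp (-β * x) := by
  funext x
  have h : HasDerivAt (fun x : ℝ => α * Real.exp (-β * x)) (α * (-β) * Real.exp (-β * x)) x := by
    have := (Real.hasDerivAt_exp (-β * x)).comp x ((hasDerivAt_id x).const_mul (-β))
    simpa [mul_comm, mul_assoc, mul_left_comm] using this.const_mul α
  exact h.deriv

/-- The exponential function `V x = α exp(−βx)` solves the nonlinear equation
`(1/2)(μ²/σ²)(V')²/V'' + δV' + rV = 0` (obtained from the HJB equation by substituting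
the unconstrained minimizer) if and only if `β = (1/δ)(r + μ²/(2σ²))`. -/
theorem stmt_18 (μ σ r δ α β : ℝ) (hμ : 0 < μ) (hσ : 0 < σ) (hr : 0 < r) (hδ : 0 < δ)
    (hα : 0 < α) (hβ : 0 < β)
    (V : ℝ → ℝ) (hV : ∀ x, V x = α * Real.exp (-β * x)) :
    (∀ x : ℝ,
      (1 / 2) * (μ ^ 2 / σ ^ 2) * (deriv V x) ^ 2 / deriv (deriv V) x
        + δ * deriv V x + r * V x = 0) ↔
    β = (1 / δ) * (r + μ ^ 2 / (2 * σ ^ 2)) := by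
  have hVeq : V = fun x => α * Real.exp (-β * x) := funext hV
  have h1 : deriv V = fun x => α * (-β) * Real.exp (-β * x) := by
    rw [hVeq, deriv_exp_aux]
  have h2 : deriv (deriv V) = fun x => α * (-β) * (-β) * Real.exp (-β * x) := by
    rw [h1, deriv_exp_aux]
  have key : ∀ x : ℝ,
      (1 / 2) * (μ ^ 2 / σ ^ 2) * (deriv V x) ^ 2 / deriv (deriv V) x
        + δ * deriv V x + r * V x
      = (α * Real.exp (-β * x)) * ((1 / 2) * (μ ^ 2 / σ ^ 2) - δ * β + r) := by
    intro x
    rw [h2, h1, hVeq]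
    simp only
    have hEpos : 0 < Real.exp (-β * x) := Real.exp_pos _
    have hden : α * -β * -β * Real.exp (-β * x) ≠ 0 := by
      have he : α * -β * -β * Real.exp (-β * x) = α * β ^ 2 * Real.exp (-β * x) := by ring
      rw [he]; positivity
    field_simp
    ring
  constructor
  · intro h
    have h0 := h 0
    rw [key 0] at h0
    simp only [mul_zero, neg_zero, Real.exp_zero, mul_one] at h0
    have hbr : (1 / 2) * (μ ^ 2 / σ ^ 2) - δ * β + r = 0 := by
      rcases mul_eq_zero.mp h0 with h' | h'
      · exact absurd h' hα.ne'
      · exact h'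
    have hδ' : δ ≠ 0 := hδ.ne'
    have hσ' : σ ≠ 0 := hσ.ne'
    field_simp at hbr ⊢
    linarith
  · intro hb x
    rw [key x, hb]
    have hδ' : δ ≠ 0 := hδ.ne'
    have hσ' : σ ≠ 0 := hσ.ne'
    have : (1 / 2) * (μ ^ 2 / σ ^ 2) - δ * (1 / δ * (r + μ ^ 2 / (2 * σ ^ 2))) + r = 0 := by
      field_simp
      ring
    rw [this, mul_zero]
end
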